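/- Let X_N be exchangeable {0,1}-valued with γ = ΣX_i. If γ is 2nd-order tighter than the Binomial, i.e., P(γ=i)^2/(P(γ=i+1)P(γ=i-1)) > (i+1)(N-i+1)/(i(N-i)) for all 1 ≤ i ≤ N-1, then belief in maturity holds: the probability P(X_{n+1}=1 | X_1=0,...,X_n=0) is strictly increasing in n for 0 ≤ n ≤ N-1 (where positive probability of the conditioning event is assumed). -/

import Mathlib

open Finset

/-!
Exchangeability makes `p y` depend only on the number of ones, `p y = t (cnt y)`, so that
`P(γ = k) = C(N, k) t(k)`; the tightness hypothesis then says that `t` is positive and strictly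
log-concave on `[0, N]`, i.e. its ratios `t(k+1)/t(k)` strictly decrease. The probability of a
prefix of `n` zeros followed by `x` ones is the binomial sum `S(l, x) = Σ_k C(l, k) t(k + x)` with
`l = N - n - x`. Passing from `l` to `l + 1` adds consecutive terms, which preserves strictly
decreasing ratios, and comparing `S(l+1, 1) / S(l+2, 0)` with `S(l, 1) / S(l+1, 0)` comes down to
`S(l, 0) S(l, 2) < S(l, 1)²`.
-/

/-- number of 1's (trues) in a 0-1 vector -/
def cnt {n : ℕ} (x : Fin n → Bool) : ℕ := (Finset.univ.filter fun i => x i = true).card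

/-- P(γ = k): probability that the total count of 1's equals k -/
def gam (N : ℕ) (p : (Fin N → Bool) → ℝ) (k : ℕ) : ℝ :=
  ∑ y : Fin N → Bool, if cnt y = k then p y else 0

/-- P(X_1 = x_1, ..., X_n = x_n): probability of observing the prefix x -/
def pref (N : ℕ) (p : (Fin N → Bool) → ℝ) {n : ℕ} (hn : n ≤ N) (x : Fin n → Bool) : ℝ :=
  ∑ y : Fin N → Bool, if (∀ i : Fin n, y (Fin.castLE hn i) = x i) then p y else 0

lemma cnt_eq_sum {n : ℕ} (x : Fin n → Bool) : cnt x = ∑ i, if x i = true then 1 else 0 :=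
  card_filter _ _

lemma cnt_le {n : ℕ} (x : Fin n → Bool) : cnt x ≤ n :=
  (card_filter_le _ _).trans_eq (card_fin n)

lemma cnt_cons {n : ℕ} (b : Bool) (x : Fin n → Bool) :
    cnt (Fin.cons b x : Fin (n + 1) → Bool) = cnt x + b.toNat := by
  rw [cnt_eq_sum, cnt_eq_sum, Fin.sum_univ_succ]
  cases b <;> simp [add_comm]

lemma cnt_append {m n : ℕ} (x : Fin m → Bool) (y : Fin n → Bool) :
    cnt (Fin.append x y) = cnt x + cnt y := by
  simp only [cnt_eq_sum, Fin.sum_univ_add, Fin.append_left, Fin.append_right]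

lemma cnt_zeros (n : ℕ) : cnt (fun _ => false : Fin n → Bool) = 0 := by
  simp [cnt]

lemma cnt_snoc_zeros_true (n : ℕ) :
    cnt (Fin.snoc (fun _ => false : Fin n → Bool) true : Fin (n + 1) → Bool) = 1 := by
  rw [cnt_eq_sum, Fin.sum_univ_castSucc]
  simp

lemma cnt_decide_lt {n k : ℕ} (hk : k ≤ n) : cnt (fun i : Fin n => decide ((i : ℕ) < k)) = k := by
  simp [cnt, Fin.card_filter_val_lt, hk]

lemma exists_perm_comp_eq_of_cnt_eq {n : ℕ} {y z : Fin n → Bool} (h : cnt y = cnt z) :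
    ∃ σ : Equiv.Perm (Fin n), y ∘ σ = z := by
  have h₁ : Fintype.card {i // z i = true} = Fintype.card {i // y i = true} := by
    simpa only [Fintype.card_subtype, cnt] using h.symm
  have h₂ : Fintype.card {i // ¬z i = true} = Fintype.card {i // ¬y i = true} := by
    simp only [Fintype.card_subtype_compl, h₁]
  refine ⟨Equiv.subtypeCongr (Fintype.equivOfCardEq h₁) (Fintype.equivOfCardEq h₂),
    funext fun i => ?_⟩
  by_cases hz : z i = true
  · simpa [Equiv.subtypeCongr, hz] using (Fintype.equivOfCardEq h₁ ⟨i, hz⟩).2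
  · simpa [Equiv.subtypeCongr, hz] using (Fintype.equivOfCardEq h₂ ⟨i, hz⟩).2

lemma card_filter_cnt_eq (n k : ℕ) : #{y : Fin n → Bool | cnt y = k} = n.choose k :=
  calc #{y : Fin n → Bool | cnt y = k}
      = #(powersetCard k (univ : Finset (Fin n))) := by
        refine card_nbij' (fun y => ({i | y i = true} : Finset (Fin n)))
          (fun s i => decide (i ∈ s)) ?_ ?_ ?_ ?_
        · intro y hy
          rw [mem_coe, mem_filter] at hy
          rw [mem_coe, mem_powersetCard]
          exact ⟨subset_univ _, hy.2⟩
        · intro s hs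
          rw [mem_coe, mem_powersetCard] at hs
          rw [mem_coe, mem_filter]
          simpa [cnt] using hs.2
        · intro y _; ext i; simp
        · intro s _; ext i; simp
    _ = n.choose k := by simp

-- The paper's `t(k) = P(γ = k) / C(N, k)`, see `eq_atCount_cnt` and `gam_eq_choose_mul`.
def atCount (N : ℕ) (p : (Fin N → Bool) → ℝ) (k : ℕ) : ℝ :=
  p fun i => decide ((i : ℕ) < k)

lemma eq_atCount_cnt {N : ℕ} {p : (Fin N → Bool) → ℝ}
    (hexch : ∀ σ : Equiv.Perm (Fin N), ∀ y : Fin N → Bool, p (y ∘ σ) = p y)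
    (y : Fin N → Bool) : p y = atCount N p (cnt y) := by
  obtain ⟨σ, hσ⟩ := exists_perm_comp_eq_of_cnt_eq (z := y) (cnt_decide_lt (cnt_le y))
  calc p y = p (_ ∘ σ) := by rw [hσ]
    _ = atCount N p (cnt y) := hexch σ _

lemma gam_eq_choose_mul {N : ℕ} {p : (Fin N → Bool) → ℝ} {f : ℕ → ℝ}
    (hf : ∀ y, p y = f (cnt y)) (k : ℕ) : gam N p k = N.choose k * f k := by
  rw [gam, ← sum_filter, sum_congr rfl fun y hy => by rw [hf, (mem_filter.1 hy).2], sum_const,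
    card_filter_cnt_eq, nsmul_eq_mul]

def binomSum (f : ℕ → ℝ) (l j : ℕ) : ℝ := ∑ s : Fin l → Bool, f (cnt s + j)

lemma binomSum_zero (f : ℕ → ℝ) (j : ℕ) : binomSum f 0 j = f j := by
  simp [binomSum, cnt]

lemma binomSum_succ (f : ℕ → ℝ) (l j : ℕ) :
    binomSum f (l + 1) j = binomSum f l j + binomSum f l (j + 1) := by
  rw [binomSum, ← (Fin.consEquiv fun _ => Bool).sum_comp, Fintype.sum_prod_type, Fintype.sum_bool,
    add_comm]
  simp [Fin.consEquiv, cnt_cons, binomSum, add_right_comm, add_assoc]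

lemma binomSum_pos {f : ℕ → ℝ} {M l j : ℕ} (hf : ∀ k ≤ M, 0 < f k) (h : l + j ≤ M) :
    0 < binomSum f l j :=
  sum_pos (fun s _ => hf _ (by have := cnt_le s; omega)) univ_nonempty

lemma pref_eq_binomSum {N : ℕ} {p : (Fin N → Bool) → ℝ} {f : ℕ → ℝ}
    (hf : ∀ y, p y = f (cnt y)) {n : ℕ} (hn : n ≤ N) (x : Fin n → Bool) :
    pref N p hn x = binomSum f (N - n) (cnt x) := by
  obtain ⟨l, rfl⟩ := Nat.exists_eq_add_of_le hn
  have hprefix (y : Fin n → Bool) (s : Fin l → Bool) (i : Fin n) :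
      Fin.append y s (Fin.castLE hn i) = y i := Fin.append_left y s i
  rw [Nat.add_sub_cancel_left, pref, ← (Fin.appendEquiv n l).sum_comp, Fintype.sum_prod_type]
  simp only [Fin.appendEquiv, Equiv.coe_fn_mk, hf, cnt_append, hprefix, ← funext_iff]
  simp only [sum_ite_irrel, sum_const_zero, sum_ite_eq', mem_univ, if_true, binomSum, add_comm]

lemma choose_mul_choose_mul_eq (n j : ℕ) :
    n.choose (j + 2) * n.choose j * ((j + 2) * (n - j)) =
      n.choose (j + 1) ^ 2 * ((j + 1) * (n - (j + 1))) :=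
  calc n.choose (j + 2) * n.choose j * ((j + 2) * (n - j))
      = (n.choose (j + 1 + 1) * (j + 1 + 1)) * (n.choose j * (n - j)) := by ring
    _ = (n.choose (j + 1) * (n - (j + 1))) * (n.choose (j + 1) * (j + 1)) := by
        rw [Nat.choose_succ_right_eq, Nat.choose_succ_right_eq]
    _ = n.choose (j + 1) ^ 2 * ((j + 1) * (n - (j + 1))) := by ring

-- Cross-multiplied form of: the ratios `f (k + 1) / f k` strictly decrease for `k < M`.
def StrictRatioAnti (f : ℕ → ℝ) (M : ℕ) : Prop :=
  ∀ j k, j ≤ k → k + 2 ≤ M → f j * f (k + 2) < f (j + 1) * f (k + 1)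

lemma strictRatioAnti_of_mul_lt_sq {f : ℕ → ℝ} {M : ℕ} (hpos : ∀ k ≤ M, 0 < f k)
    (hf : ∀ k, k + 2 ≤ M → f k * f (k + 2) < f (k + 1) ^ 2) : StrictRatioAnti f M := by
  intro j k hjk
  induction k, hjk using Nat.le_induction with
  | base => intro hj; simpa [sq] using hf j hj
  | succ k hjk ih =>
    intro hk
    have hk₁ := hpos (k + 1) (by omega)
    refine lt_of_mul_lt_mul_left ?_ hk₁.le
    calc f (k + 1) * (f j * f (k + 1 + 2))
        = f j * (f (k + 1) * f (k + 3)) := by ring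
      _ < f j * f (k + 2) ^ 2 := mul_lt_mul_of_pos_left (hf (k + 1) hk) (hpos j (by omega))
      _ = (f j * f (k + 2)) * f (k + 2) := by ring
      _ < (f (j + 1) * f (k + 1)) * f (k + 2) :=
          mul_lt_mul_of_pos_right (ih (by omega)) (hpos (k + 2) (by omega))
      _ = f (k + 1) * (f (j + 1) * f (k + 1 + 1)) := by ring

lemma StrictRatioAnti.mono {f : ℕ → ℝ} {M M' : ℕ} (hf : StrictRatioAnti f M) (h : M' ≤ M) :
    StrictRatioAnti f M' :=
  fun j k hjk hk => hf j k hjk (hk.trans h)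

lemma StrictRatioAnti.add_shift {g : ℕ → ℝ} {M : ℕ} (hg : StrictRatioAnti g (M + 1)) :
    StrictRatioAnti (fun j => g j + g (j + 1)) M := by
  intro j k hjk hk
  have h₁ := hg j k hjk (by omega)
  have h₂ := hg j (k + 1) (by omega) (by omega)
  have h₃ := hg (j + 1) (k + 1) (by omega) (by omega)
  have h₄ : g (j + 1) * g (k + 2) ≤ g (j + 2) * g (k + 1) := by
    rcases hjk.lt_or_eq with hlt | rfl
    · exact (hg (j + 1) k hlt (by omega)).le
    · rw [mul_comm]
  linarith

lemma StrictRatioAnti.binomSum {f : ℕ → ℝ} {M l : ℕ} (hf : StrictRatioAnti f (M + l)) :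
    StrictRatioAnti (binomSum f l) M := by
  induction l generalizing M with
  | zero => simpa [funext (binomSum_zero f)] using hf
  | succ l ih =>
    rw [funext (binomSum_succ f l)]
    exact (ih (by rwa [add_right_comm, add_assoc])).add_shift

def SecondOrderTighter (N : ℕ) (p : (Fin N → Bool) → ℝ) : Prop :=
  ∀ i : ℕ, 1 ≤ i → i ≤ N - 1 →
    gam N p i ^ 2 / (gam N p (i + 1) * gam N p (i - 1)) >
      (((i + 1) * (N - i + 1) : ℕ) : ℝ) / ((i * (N - i) : ℕ) : ℝ)

section SecondOrderTighter

variable {N : ℕ} {p : (Fin N → Bool) → ℝ}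

lemma gam_nonneg (hnn : ∀ y, 0 ≤ p y) (k : ℕ) : 0 ≤ gam N p k :=
  sum_nonneg fun y _ => ite_nonneg (hnn y) le_rfl

lemma SecondOrderTighter.lt_div {j : ℕ} (h : SecondOrderTighter N p) (hj : j + 2 ≤ N) :
    (((j + 2) * (N - j) : ℕ) : ℝ) / (((j + 1) * (N - (j + 1)) : ℕ) : ℝ) <
      gam N p (j + 1) ^ 2 / (gam N p (j + 2) * gam N p j) := by
  have := h (j + 1) (by omega) (by omega)
  rwa [Nat.add_sub_cancel, show N - (j + 1) + 1 = N - j by omega] at this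

lemma SecondOrderTighter.gam_pos_triple {j : ℕ} (h : SecondOrderTighter N p)
    (hnn : ∀ y, 0 ≤ p y) (hj : j + 2 ≤ N) :
    0 < gam N p j ∧ 0 < gam N p (j + 1) ∧ 0 < gam N p (j + 2) := by
  have hbound : (0 : ℝ) < (((j + 2) * (N - j) : ℕ) : ℝ) / (((j + 1) * (N - (j + 1)) : ℕ) : ℝ) :=
    div_pos (Nat.cast_pos.2 (Nat.mul_pos (by omega) (by omega)))
      (Nat.cast_pos.2 (Nat.mul_pos (by omega) (by omega)))
  -- a ratio exceeding a positive bound has a nonzero denominator, despite `x / 0 = 0`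
  rcases div_pos_iff.1 (hbound.trans (h.lt_div hj)) with ⟨hnum, hden⟩ | ⟨_, hden⟩
  · refine ⟨pos_of_mul_pos_right hden (gam_nonneg hnn _), ?_,
      pos_of_mul_pos_left hden (gam_nonneg hnn _)⟩
    exact (gam_nonneg hnn _).lt_of_ne (by rintro h; simp [← h] at hnum)
  · exact absurd hden (mul_nonneg (gam_nonneg hnn _) (gam_nonneg hnn _)).not_gt

lemma SecondOrderTighter.gam_pos (h : SecondOrderTighter N p) (hnn : ∀ y, 0 ≤ p y)
    (hN : 2 ≤ N) {k : ℕ} (hk : k ≤ N) : 0 < gam N p k := by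
  by_cases hk₂ : k + 2 ≤ N
  · exact (h.gam_pos_triple hnn hk₂).1
  · obtain ⟨-, h₁, h₂⟩ := h.gam_pos_triple hnn (j := N - 2) (by omega)
    rcases show k = N - 2 + 1 ∨ k = N - 2 + 2 by omega with rfl | rfl
    exacts [h₁, h₂]

lemma SecondOrderTighter.pos {f : ℕ → ℝ} (h : SecondOrderTighter N p)
    (hnn : ∀ y, 0 ≤ p y) (hf : ∀ y, p y = f (cnt y)) (hN : 2 ≤ N) {k : ℕ} (hk : k ≤ N) :
    0 < f k :=
  pos_of_mul_pos_right (gam_eq_choose_mul hf k ▸ h.gam_pos hnn hN hk) (Nat.cast_nonneg _)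

lemma SecondOrderTighter.mul_lt_sq {f : ℕ → ℝ} (h : SecondOrderTighter N p)
    (hnn : ∀ y, 0 ≤ p y) (hf : ∀ y, p y = f (cnt y)) {j : ℕ} (hj : j + 2 ≤ N) :
    f j * f (j + 2) < f (j + 1) ^ 2 := by
  obtain ⟨h₀, -, h₂⟩ := h.gam_pos_triple hnn hj
  have hlt := h.lt_div hj
  rw [div_lt_div_iff₀ (Nat.cast_pos.2 (Nat.mul_pos (by omega) (by omega))) (mul_pos h₂ h₀)]
    at hlt
  simp only [gam_eq_choose_mul hf] at hlt
  have hK : 0 < ((N.choose (j + 1) ^ 2 * ((j + 1) * (N - (j + 1))) : ℕ) : ℝ) :=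
    Nat.cast_pos.2 (Nat.mul_pos (pow_pos (Nat.choose_pos (by omega)) 2)
      (Nat.mul_pos (by omega) (by omega)))
  have hchoose := congrArg (Nat.cast : ℕ → ℝ) (choose_mul_choose_mul_eq N j)
  refine lt_of_mul_lt_mul_left ?_ hK.le
  push_cast at hchoose hlt ⊢
  linear_combination hlt - f j * f (j + 2) * hchoose

end SecondOrderTighter

lemma binomSum_div_lt_succ {f : ℕ → ℝ} {N n : ℕ} (hpos : ∀ k ≤ N, 0 < f k)
    (hf : StrictRatioAnti f N) (hn : n + 1 < N) :
    binomSum f (N - (n + 1)) 1 / binomSum f (N - n) 0 <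
      binomSum f (N - (n + 1 + 1)) 1 / binomSum f (N - (n + 1)) 0 := by
  obtain ⟨l, rfl⟩ : ∃ l, N = l + 2 + n := ⟨N - (n + 2), by omega⟩
  rw [show l + 2 + n - (n + 1) = l + 1 by omega, show l + 2 + n - n = l + 2 by omega,
    show l + 2 + n - (n + 1 + 1) = l by omega,
    div_lt_div_iff₀ (binomSum_pos hpos (by omega)) (binomSum_pos hpos (by omega))]
  have hlc := (hf.mono (by omega : 2 + l ≤ l + 2 + n)).binomSum 0 0 le_rfl le_rfl
  simp only [binomSum_succ]
  linear_combination hlc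

lemma pref_div_pref_eq_binomSum_div {N : ℕ} {p : (Fin N → Bool) → ℝ} {f : ℕ → ℝ}
    (hf : ∀ y, p y = f (cnt y)) {n : ℕ} (hn : n < N) :
    pref N p hn (Fin.snoc (fun _ => false : Fin n → Bool) true) /
        pref N p hn.le (fun _ => false : Fin n → Bool) =
      binomSum f (N - (n + 1)) 1 / binomSum f (N - n) 0 := by
  rw [pref_eq_binomSum hf, pref_eq_binomSum hf, cnt_snoc_zeros_true, cnt_zeros]

theorem second_order_tighter_belief_in_maturity_general (N : ℕ) (p : (Fin N → Bool) → ℝ)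
    (hnn : ∀ y, 0 ≤ p y)
    (hexch : ∀ σ : Equiv.Perm (Fin N), ∀ y : Fin N → Bool, p (y ∘ σ) = p y)
    (h2nd : ∀ i : ℕ, 1 ≤ i → i ≤ N - 1 →
      gam N p i ^ 2 / (gam N p (i + 1) * gam N p (i - 1)) >
        (((i + 1) * (N - i + 1) : ℕ) : ℝ) / ((i * (N - i) : ℕ) : ℝ)) :
    ∀ (n m : ℕ) (hn : n < N) (hm : m < N), n < m →
      pref N p hn (Fin.snoc (fun _ => false : Fin n → Bool) true) /
          pref N p hn.le (fun _ => false : Fin n → Bool) <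
        pref N p hm (Fin.snoc (fun _ => false : Fin m → Bool) true) /
          pref N p hm.le (fun _ => false : Fin m → Bool) := by
  intro n m hn hm hnm
  have htighter : SecondOrderTighter N p := h2nd
  have hf := eq_atCount_cnt hexch
  have hpos (k : ℕ) (hk : k ≤ N) := htighter.pos hnn hf (by omega) hk
  have hratio := strictRatioAnti_of_mul_lt_sq hpos fun j hj => htighter.mul_lt_sq hnn hf hj
  rw [pref_div_pref_eq_binomSum_div hf hn, pref_div_pref_eq_binomSum_div hf hm]
  exact strictMonoOn_Iic_of_lt_succ
    (ψ := fun n => binomSum (atCount N p) (N - (n + 1)) 1 / binomSum (atCount N p) (N - n) 0)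
    (n := N - 1)
    (fun k hk => binomSum_div_lt_succ hpos hratio (by omega))
    (Set.mem_Iic.2 (by omega)) (Set.mem_Iic.2 (by omega)) hnm

/-- Statement: if γ is 2nd-order tighter than the Binomial, then P(X_{n+1}=1 | X_1=0,...,X_n=0)
is strictly tighterly ordered (monotone) in n for 0 ≤ n ≤ N-1. -/
theorem second_order_tighter_belief_in_maturity (N : ℕ) (p : (Fin N → Bool) → ℝ)
    (hnn : ∀ y, 0 ≤ p y) (hsum : ∑ y, p y = 1)
    (hexch : ∀ σ : Equiv.Perm (Fin N), ∀ y : Fin N → Bool, p (y ∘ σ) = p y)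
    (h2nd : ∀ i : ℕ, 1 ≤ i → i ≤ N - 1 →
      gam N p i ^ 2 / (gam N p (i + 1) * gam N p (i - 1)) >
        (((i + 1) * (N - i + 1) : ℕ) : ℝ) / ((i * (N - i) : ℕ) : ℝ))
    (hpos : ∀ (n : ℕ) (hn : n < N), 0 < pref N p hn.le (fun _ => false : Fin n → Bool)) :
    ∀ (n m : ℕ) (hn : n < N) (hm : m < N), n < m →
      pref N p hn (Fin.snoc (fun _ => false : Fin n → Bool) true) /
          pref N p hn.le (fun _ => false : Fin n → Bool) <
        pref N p hm (Fin.snoc (fun _ => false : Fin m → Bool) true) /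
          pref N p hm.le (fun _ => false : Fin m → Bool) :=
  second_order_tighter_belief_in_maturity_general N p hnn hexch h2nd
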